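/- Let q be a real number with 0 ≤ q < 1. Then the family (d,m) ↦ q^{md}/m indexed by pairs of positive integers (d,m) is summable, the series ∑_{d≥1} p(d)·q^d converges, and exp( ∑_{d≥1} ∑_{m≥1} q^{md}/m ) = 1 + ∑_{d≥1} p(d)·q^d, where p(d) denotes the number of partitions of the positive integer d. -/

import Mathlib

/-!
For `d ≥ 1` the inner series is `-log (1 - q ^ d)`, so the exponential is Euler's product
`∏ (1 - q ^ d)⁻¹`. Expanding the first `N` factors as geometric series and multiplying out
(in `ℝ≥0∞`, where this needs no convergence bookkeeping) counts the partitions with all parts at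
most `N`, one for each vector of multiplicities of the parts `1, …, N`. These counts agree with
`p(n)` for `n < N` and never exceed it, so the truncated products converge to `∑ p(n) q ^ n`.
-/

open scoped ENNReal
open Finset Filter Topology

namespace Multiset

variable {ι α : Type*} [Fintype ι] {f : ι → α}

theorem mem_range_of_mem_sum_replicate {c : ι → ℕ} {a : α}
    (ha : a ∈ ∑ i, replicate (c i) (f i)) : a ∈ Set.range f := by
  obtain ⟨i, -, hi⟩ := mem_sum.1 ha
  exact ⟨i, (eq_of_mem_replicate hi).symm⟩

theorem count_sum_replicate [DecidableEq α] (hf : Function.Injective f) (c : ι → ℕ) (i : ι) :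
    (∑ k, replicate (c k) (f k)).count (f i) = c i := by
  rw [count_sum', Finset.sum_eq_single i] <;> simp_all [count_replicate, hf.eq_iff]

theorem eq_sum_replicate_count [DecidableEq α] (hf : Function.Injective f) {s : Multiset α}
    (hs : ∀ a ∈ s, a ∈ Set.range f) : s = ∑ i, replicate (s.count (f i)) (f i) := by
  ext a
  by_cases ha : a ∈ Set.range f
  · obtain ⟨i, rfl⟩ := ha
    rw [count_sum_replicate hf]
  · rw [count_eq_zero.2 fun h => ha (hs a h), count_sum']
    exact (Finset.sum_eq_zero fun i _ => by rw [count_replicate, if_neg fun h => ha ⟨i, h⟩]).symm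

end Multiset

theorem Fin.val_add_one_injective (N : ℕ) : Function.Injective fun i : Fin N => (i : ℕ) + 1 :=
  fun _ _ h => Fin.ext (Nat.succ_injective h)

theorem ENNReal.prod_univ_tsum {α : Type*} :
    ∀ {N : ℕ} (f : Fin N → α → ℝ≥0∞), ∏ i, ∑' a, f i a = ∑' c : Fin N → α, ∏ i, f i (c i)
  | 0, f => by
    rw [tsum_eq_single default fun c hc => (hc (Subsingleton.elim _ _)).elim]
    simp
  | N + 1, f => by
    rw [Fin.prod_univ_succ, ENNReal.prod_univ_tsum, ← ENNReal.tsum_mul_right]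
    simp_rw [← ENNReal.tsum_mul_left]
    rw [← ENNReal.tsum_prod, ← (Fin.consEquiv fun _ => α).tsum_eq]
    simp [Fin.prod_univ_succ]

theorem hasSum_of_tsum_ofReal_eq {α : Type*} {f : α → ℝ} {a : ℝ} (hf : ∀ i, 0 ≤ f i)
    (ha : 0 ≤ a) (h : ∑' i, ENNReal.ofReal (f i) = ENNReal.ofReal a) : HasSum f a := by
  have hsum := ENNReal.hasSum_toReal (h ▸ ENNReal.ofReal_ne_top)
  rwa [← ENNReal.tsum_toReal_eq fun _ => ENNReal.ofReal_ne_top, h, ENNReal.toReal_ofReal ha,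
    funext fun i => ENNReal.toReal_ofReal (hf i)] at hsum

theorem hasSum_of_tendsto_of_dominated {g : ℕ → ℝ} {G : ℕ → ℕ → ℝ} {P : ℕ → ℝ} {L : ℝ}
    (hG : ∀ N, HasSum (G N) (P N)) (hG0 : ∀ N n, 0 ≤ G N n) (hGg : ∀ N n, G N n ≤ g n)
    (hGeq : ∀ N n, n < N → G N n = g n) (hP : Tendsto P atTop (𝓝 L)) : HasSum g L := by
  obtain ⟨c, hc⟩ := hP.bddAbove_range
  have hg : Summable g := summable_of_sum_range_le (fun n => (hG0 0 n).trans (hGg 0 n)) fun N =>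
    calc ∑ n ∈ range N, g n = ∑ n ∈ range N, G N n :=
          (sum_congr rfl fun n hn => hGeq N n (mem_range.1 hn)).symm
      _ ≤ P N := sum_le_hasSum _ (fun n _ => hG0 N n) (hG N)
      _ ≤ c := hc ⟨N, rfl⟩
  have hPg : Tendsto P atTop (𝓝 (∑' n, g n)) := by
    simpa only [(hG _).tsum_eq] using tendsto_tsum_of_dominated_convergence hg
      (fun n => tendsto_atTop_of_eventually_const (i₀ := n + 1) fun N hN => hGeq N n hN)
      (Eventually.of_forall fun N n => by rw [Real.norm_of_nonneg (hG0 N n)]; exact hGg N n)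
  exact tendsto_nhds_unique hPg hP ▸ hg.hasSum

theorem Real.hasSum_pow_div_pnat {x : ℝ} (h : |x| < 1) :
    HasSum (fun m : ℕ+ => x ^ (m : ℕ) / (m : ℕ)) (-log (1 - x)) := by
  rw [hasSum_pnat_iff_hasSum_succ (f := fun n : ℕ => x ^ n / n)]
  convert Real.hasSum_pow_div_log_of_abs_lt_one h using 3
  push_cast
  rfl

theorem summable_pow_mul_div_pnat {q : ℝ} (h0 : 0 ≤ q) (h1 : q < 1) :
    Summable fun p : ℕ+ × ℕ+ => q ^ ((p.2 : ℕ) * (p.1 : ℕ)) / (p.2 : ℕ) := by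
  have hgeom := summable_geometric_of_lt_one h0 h1
  refine Summable.of_nonneg_of_le (fun _ => by positivity) (fun ⟨d, m⟩ => ?_)
    ((hgeom.comp_injective PNat.coe_injective).mul_of_nonneg
      (hgeom.comp_injective PNat.natPred_injective) (fun _ => pow_nonneg h0 _)
      fun _ => pow_nonneg h0 _)
  have hexp : (d : ℕ) + m.natPred ≤ m * d := by
    rw [← m.natPred_add_one, add_mul, one_mul, add_comm]
    exact Nat.add_le_add_right (Nat.le_mul_of_pos_right _ d.pos) _
  calc q ^ ((m : ℕ) * d) / (m : ℕ) ≤ q ^ ((m : ℕ) * d) :=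
        div_le_self (by positivity) (Nat.one_le_cast.2 m.pos)
    _ ≤ q ^ ((d : ℕ) + m.natPred) := pow_le_pow_of_le_one h0 h1.le hexp
    _ = q ^ (d : ℕ) * q ^ m.natPred := pow_add q _ _

namespace Nat.Partition

theorem sum_sum_replicate {N : ℕ} (c : Fin N → ℕ) :
    (∑ i : Fin N, Multiset.replicate (c i) ((i : ℕ) + 1)).sum =
      ∑ i : Fin N, ((i : ℕ) + 1) * c i := by
  simp [Multiset.sum_sum, mul_comm]

theorem mem_range_val_add_one_of_le {N n : ℕ} {p : n.Partition} (hp : ∀ j ∈ p.parts, j ≤ N) :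
    ∀ j ∈ p.parts, j ∈ Set.range fun i : Fin N => (i : ℕ) + 1 := fun j hj => by
  have := p.parts_pos hj
  exact ⟨⟨j - 1, by have := hp j hj; omega⟩, by simp only; omega⟩

def multiplicityEquiv (N n : ℕ) :
    {c : Fin N → ℕ // ∑ i : Fin N, ((i : ℕ) + 1) * c i = n} ≃
      {p : n.Partition // ∀ j ∈ p.parts, j ≤ N} where
  toFun c := ⟨⟨∑ i, Multiset.replicate (c.1 i) ((i : ℕ) + 1), fun hj => by
      obtain ⟨i, rfl⟩ := Multiset.mem_range_of_mem_sum_replicate hj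
      exact Nat.succ_pos _, by rw [sum_sum_replicate, c.2]⟩, fun _ hj => by
      obtain ⟨i, rfl⟩ := Multiset.mem_range_of_mem_sum_replicate (c := c.1) hj
      exact i.2⟩
  invFun p := ⟨fun i => p.1.parts.count ((i : ℕ) + 1), by
    rw [← sum_sum_replicate, ← Multiset.eq_sum_replicate_count (Fin.val_add_one_injective N)
      (mem_range_val_add_one_of_le p.2), p.1.parts_sum]⟩
  left_inv c := Subtype.ext <| funext <|
    Multiset.count_sum_replicate (Fin.val_add_one_injective N) c.1
  right_inv p := Subtype.ext <| Nat.Partition.ext <|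
    (Multiset.eq_sum_replicate_count (Fin.val_add_one_injective N)
      (mem_range_val_add_one_of_le p.2)).symm

theorem tsum_pow_weight_eq_tsum_card_restricted (r : ℝ≥0∞) (N : ℕ) :
    ∑' c : Fin N → ℕ, r ^ (∑ i : Fin N, ((i : ℕ) + 1) * c i) =
      ∑' n, (#(restricted n (· ≤ N)) : ℝ≥0∞) * r ^ n := by
  rw [← (Equiv.sigmaFiberEquiv fun c : Fin N → ℕ => ∑ i : Fin N, ((i : ℕ) + 1) * c i).tsum_eq,
    ENNReal.tsum_sigma']
  refine tsum_congr fun n => ?_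
  rw [tsum_congr fun c : {c // _ = n} => by rw [Equiv.sigmaFiberEquiv_apply, c.2],
    ← (multiplicityEquiv N n).symm.tsum_eq, tsum_fintype, Finset.sum_const, nsmul_eq_mul,
    Finset.card_univ, Fintype.card_subtype]
  rfl

theorem prod_inv_one_sub_pow_eq_tsum_card_restricted (r : ℝ≥0∞) (N : ℕ) :
    ∏ i ∈ range N, (1 - r ^ (i + 1))⁻¹ = ∑' n, (#(restricted n (· ≤ N)) : ℝ≥0∞) * r ^ n := by
  simp_rw [← Fin.prod_univ_eq_prod_range, ← ENNReal.tsum_geometric, ← pow_mul,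
    ENNReal.prod_univ_tsum, Finset.prod_pow_eq_pow_sum, tsum_pow_weight_eq_tsum_card_restricted]

theorem hasSum_card_restricted_mul_pow {q : ℝ} (h0 : 0 ≤ q) (h1 : q < 1) (N : ℕ) :
    HasSum (fun n => (#(restricted n (· ≤ N)) : ℝ) * q ^ n)
      (∏ i ∈ range N, (1 - q ^ (i + 1))⁻¹) := by
  have hfactor : ∀ i : ℕ, 0 < 1 - q ^ (i + 1) :=
    fun i => sub_pos.2 (pow_lt_one₀ h0 h1 i.succ_ne_zero)
  refine hasSum_of_tsum_ofReal_eq (fun n => by positivity)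
    (prod_nonneg fun i _ => (inv_pos.2 (hfactor i)).le) ?_
  rw [ENNReal.ofReal_prod_of_nonneg fun i _ => (inv_pos.2 (hfactor i)).le]
  simp_rw [ENNReal.ofReal_inv_of_pos (hfactor _), ENNReal.ofReal_sub _ (pow_nonneg h0 _),
    ENNReal.ofReal_mul (Nat.cast_nonneg _), ENNReal.ofReal_natCast, ENNReal.ofReal_one,
    ENNReal.ofReal_pow h0]
  exact (prod_inv_one_sub_pow_eq_tsum_card_restricted _ N).symm

theorem restricted_le_eq_univ {n N : ℕ} (h : n ≤ N) : restricted n (· ≤ N) = univ :=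
  filter_true_of_mem fun _ _ _ hj => (le_of_mem_parts hj).trans h

theorem hasSum_card_mul_pow_of_hasProd {q : ℝ} (h0 : 0 ≤ q) (h1 : q < 1) {L : ℝ}
    (hL : HasProd (fun n : ℕ+ => (1 - q ^ (n : ℕ))⁻¹) L) :
    HasSum (fun n => (Fintype.card n.Partition : ℝ) * q ^ n) L := by
  refine hasSum_of_tendsto_of_dominated (hasSum_card_restricted_mul_pow h0 h1)
    (fun _ _ => by positivity) (fun N n => ?_) (fun N n hn => ?_)
    (hasProd_pnat_iff_hasProd_succ (f := fun n => (1 - q ^ n)⁻¹) |>.1 hL).tendsto_prod_nat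
  · exact mul_le_mul_of_nonneg_right (by exact_mod_cast card_le_univ _) (pow_nonneg h0 n)
  · rw [restricted_le_eq_univ hn.le, Finset.card_univ]

end Nat.Partition

/-- For `0 ≤ q < 1`: the family `(d,m) ↦ q^{md}/m` over pairs of positive integers is
summable, the series `∑_{d≥1} p(d) q^d` converges, and
`exp(∑_{d≥1} ∑_{m≥1} q^{md}/m) = 1 + ∑_{d≥1} p(d) q^d`,
where `p(d)` is the number of partitions of `d`. -/
theorem exp_log_partition_gf (q : ℝ) (h0 : 0 ≤ q) (h1 : q < 1) :
    Summable (fun p : ℕ+ × ℕ+ => q ^ ((p.2 : ℕ) * (p.1 : ℕ)) / (p.2 : ℕ)) ∧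
    Summable (fun d : ℕ+ => (Fintype.card (Nat.Partition (d : ℕ)) : ℝ) * q ^ (d : ℕ)) ∧
    Real.exp (∑' d : ℕ+, ∑' m : ℕ+, q ^ ((m : ℕ) * (d : ℕ)) / (m : ℕ))
      = 1 + ∑' d : ℕ+, (Fintype.card (Nat.Partition (d : ℕ)) : ℝ) * q ^ (d : ℕ) := by
  have hpow : ∀ d : ℕ+, q ^ (d : ℕ) < 1 := fun d => pow_lt_one₀ h0 h1 d.ne_zero
  have hdouble := summable_pow_mul_div_pnat h0 h1
  have hlog : HasSum (fun d : ℕ+ => Real.log (1 - q ^ (d : ℕ))⁻¹)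
      (∑' d : ℕ+, ∑' m : ℕ+, q ^ ((m : ℕ) * (d : ℕ)) / (m : ℕ)) := by
    refine hdouble.prod.hasSum.congr_fun fun d => ?_
    simp_rw [Real.log_inv, mul_comm _ (d : ℕ), pow_mul]
    refine (Real.hasSum_pow_div_pnat ?_).tsum_eq.symm
    rw [abs_of_nonneg (pow_nonneg h0 _)]
    exact hpow d
  have heuler := Nat.Partition.hasSum_card_mul_pow_of_hasProd h0 h1
    (Real.hasProd_of_hasSum_log (fun d => inv_pos.2 (sub_pos.2 (hpow d))) hlog)
  refine ⟨hdouble, heuler.summable.comp_injective PNat.coe_injective, ?_⟩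
  rw [← heuler.tsum_eq, ← tsum_zero_pnat_eq_tsum_nat heuler.summable]
  simp
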